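/- arXiv:2105.08317 — 2 statements merged into one kernel-verified Lean document; each statement's English description precedes it below -/
import Mathlib

section
/- Let $D := S_\kappa \cap [\ell,u] \subset \mathbb{R}^n$, where $S_\kappa = \{w \in \mathbb{R}^n : \|w\|_0 \le \kappa\}$ and $[\ell,u]$ is a box with $0 \in [\ell_i,u_i]$ for all $i$. Let $w \in \mathbb{R}^n$ and let $y$ be a projection of $w$ onto $D$ (i.e., a minimizer of $\|z - w\|$ over $z \in D$). Then for each index $i$, either $y_i = 0$ or $y_i = P_{[\ell_i,u_i]}(w_i)$. -/
/-!
Changing the single nonzero coordinate `y i` of a projection `y` onto `D` to the interval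
projection `p = P_{[ℓᵢ,uᵢ]}(wᵢ)` keeps the point in `D` (it does not create a new nonzero entry)
and changes `‖· - w‖²` only in the `i`-th term. Minimality of `y` thus gives
`(yᵢ - wᵢ)² ≤ (p - wᵢ)²`, and since `p` is the unique nearest point of the interval, `yᵢ = p`.
-/

/-- Projection of a real number onto the interval `[l, u]`. -/
noncomputable def projInt (l u t : ℝ) : ℝ := max l (min t u)

/-- The number of nonzero components of a vector. -/
noncomputable def zeroNorm {n : ℕ} (w : Fin n → ℝ) : ℕ := Set.ncard {i | w i ≠ 0}

open Function

lemma projInt_mem_Icc {l u : ℝ} (h : l ≤ u) (t : ℝ) : projInt l u t ∈ Set.Icc l u :=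
  ⟨le_max_left _ _, max_le h (min_le_right _ _)⟩

lemma sub_projInt_mul_sub_projInt_nonpos {l u s : ℝ} (hs : s ∈ Set.Icc l u) (t : ℝ) :
    (t - projInt l u t) * (s - projInt l u t) ≤ 0 := by
  obtain ⟨hls, hsu⟩ := hs
  unfold projInt
  rcases le_total t u with htu | hut
  · rw [min_eq_left htu]
    rcases le_total l t with hlt | htl
    · simp [max_eq_right hlt]
    · rw [max_eq_left htl]; nlinarith
  · rw [min_eq_right hut, max_eq_right (hls.trans hsu)]; nlinarith

lemma eq_projInt_of_sq_sub_le {l u s t : ℝ} (hs : s ∈ Set.Icc l u)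
    (h : (s - t) ^ 2 ≤ (projInt l u t - t) ^ 2) : s = projInt l u t := by
  -- `(s - t)² = (s - p)² + 2 (s - p)(p - t) + (p - t)²` with a nonnegative middle term
  have := sub_projInt_mul_sub_projInt_nonpos hs t
  nlinarith [sq_nonneg (s - projInt l u t)]

lemma EuclideanSpace.norm_toLp_update_sub_sq {ι : Type*} [Fintype ι] [DecidableEq ι]
    (x w : EuclideanSpace ℝ ι) (i : ι) (a : ℝ) :
    ‖WithLp.toLp 2 (update x.ofLp i a) - w‖ ^ 2 = ‖x - w‖ ^ 2 - (x i - w i) ^ 2 + (a - w i) ^ 2 := by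
  simp only [EuclideanSpace.norm_sq_eq, PiLp.sub_apply, Real.norm_eq_abs, sq_abs]
  rw [← Finset.add_sum_erase _ _ (Finset.mem_univ i), ← Finset.add_sum_erase _ _ (Finset.mem_univ i),
    Finset.sum_congr rfl fun j hj => by rw [update_of_ne (Finset.ne_of_mem_erase hj)], update_self]
  ring

lemma zeroNorm_update_le {n : ℕ} {x : Fin n → ℝ} {i : Fin n} (hx : x i ≠ 0) (a : ℝ) :
    zeroNorm (update x i a) ≤ zeroNorm x := by
  refine Set.ncard_le_ncard (fun j hj => ?_) (Set.toFinite _)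
  rcases eq_or_ne j i with rfl | hji
  · exact hx
  · simpa [update_of_ne hji] using hj

theorem stmt_2_general {n : ℕ} (κ : ℕ)
    (l u : Fin n → ℝ)
    (w y : EuclideanSpace ℝ (Fin n))
    (hyD : zeroNorm y ≤ κ ∧ ∀ i, l i ≤ y i ∧ y i ≤ u i)
    (hymin : ∀ z : EuclideanSpace ℝ (Fin n),
      (zeroNorm z ≤ κ ∧ ∀ i, l i ≤ z i ∧ z i ≤ u i) → ‖y - w‖ ≤ ‖z - w‖) :
    ∀ i, y i = 0 ∨ y i = projInt (l i) (u i) (w i) := by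
  intro i
  refine or_iff_not_imp_left.2 fun hyi => eq_projInt_of_sq_sub_le (hyD.2 i) ?_
  set p := projInt (l i) (u i) (w i)
  have hp : p ∈ Set.Icc (l i) (u i) := projInt_mem_Icc ((hyD.2 i).1.trans (hyD.2 i).2) _
  have hzD : zeroNorm (update y.ofLp i p) ≤ κ ∧
      ∀ j, l j ≤ update y.ofLp i p j ∧ update y.ofLp i p j ≤ u j :=
    ⟨(zeroNorm_update_le hyi p).trans hyD.1, fun j => by
      rcases eq_or_ne j i with rfl | hji
      · simpa using hp
      · simpa [update_of_ne hji] using hyD.2 j⟩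
  have hnorm := pow_le_pow_left₀ (norm_nonneg _) (hymin (WithLp.toLp 2 (update y.ofLp i p)) hzD) 2
  rw [EuclideanSpace.norm_toLp_update_sub_sq] at hnorm
  linarith

theorem stmt_2 {n : ℕ} (κ : ℕ) (hκ1 : 1 ≤ κ) (hκn : κ ≤ n - 1)
    (l u : Fin n → ℝ) (hlu : ∀ i, l i < u i) (h0 : ∀ i, l i ≤ 0 ∧ 0 ≤ u i)
    (w y : EuclideanSpace ℝ (Fin n))
    (hyD : zeroNorm y ≤ κ ∧ ∀ i, l i ≤ y i ∧ y i ≤ u i)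
    (hymin : ∀ z : EuclideanSpace ℝ (Fin n),
      (zeroNorm z ≤ κ ∧ ∀ i, l i ≤ z i ∧ z i ≤ u i) → ‖y - w‖ ≤ ‖z - w‖) :
    ∀ i, y i = 0 ∨ y i = projInt (l i) (u i) (w i) :=
  stmt_2_general κ l u w y hyD hymin
end

section
/- Under the hypotheses of the nonmonotone Armijo scheme (with $\varphi$ bounded from below on the sublevel set $\{w \in D : \varphi(w) \le \varphi(w^0)\}$ and uniformly continuous there, $\gamma_j \ge \gamma_{\min} > 0$), the iterates satisfy $\|w^{j+1} - w^j\| \to 0$ as $j \to \infty$. -/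
/-!
Let `M j` be the maximum of `φ (w i)` over the window `j - min j m ≤ i ≤ j`. The Armijo condition
and the descent inequality give `φ (w (j + 1)) + c ‖w (j + 1) - w j‖² ≤ M j` with `c = σ γmin / 2`,
so `M` is antitone, bounded below, and converges to some `L`. Writing `M j = φ (w (ℓ j))` with
`j - m ≤ ℓ j ≤ j`, the same inequality at `ℓ j - k - 1` together with uniform continuity of `φ`
pushes the convergence `φ (w (ℓ j - k)) → L` from `k` to `k + 1`. Since every index is of the form
`ℓ n - k` with `k ≤ m`, the whole sequence `φ (w j)` tends to `L`, and then
`c ‖w (j + 1) - w j‖² ≤ M j - φ (w (j + 1)) → 0`.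
-/

open Filter Topology Uniformity

lemma tendsto_zero_of_mul_sq_le {a b : ℕ → ℝ} {c : ℝ} (hc : 0 < c) (ha : ∀ j, 0 ≤ a j)
    (hle : ∀ j, c * a j ^ 2 ≤ b j) (hb : Tendsto b atTop (𝓝 0)) :
    Tendsto a atTop (𝓝 0) := by
  have hsqrt : Tendsto (fun j => Real.sqrt (b j / c)) atTop (𝓝 0) := by
    simpa using (hb.div_const c).sqrt
  refine squeeze_zero ha (fun j => ?_) hsqrt
  rw [← Real.sqrt_sq (ha j)]
  exact Real.sqrt_le_sqrt ((le_div_iff₀ hc).2 (by linarith [hle j]))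

lemma UniformContinuousOn.tendsto_dist_comp {α β ι : Type*} [PseudoMetricSpace α]
    [PseudoMetricSpace β] {f : α → β} {s : Set α} (hf : UniformContinuousOn f s) {l : Filter ι}
    {x y : ι → α} (hx : ∀ i, x i ∈ s) (hy : ∀ i, y i ∈ s)
    (h : Tendsto (fun i => dist (x i) (y i)) l (𝓝 0)) :
    Tendsto (fun i => dist (f (x i)) (f (y i))) l (𝓝 0) := by
  have hxy : Tendsto (fun i => (x i, y i)) l (𝓤 α ⊓ 𝓟 (s ×ˢ s)) :=
    tendsto_inf.2 ⟨tendsto_uniformity_iff_dist_tendsto_zero.2 h,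
      tendsto_principal.2 (Eventually.of_forall fun i => ⟨hx i, hy i⟩)⟩
  exact tendsto_uniformity_iff_dist_tendsto_zero.1 (Tendsto.comp hf hxy)

lemma tendsto_of_forall_tendsto_comp_sub {X : Type*} [TopologicalSpace X] {u : ℕ → X} {L : X}
    {ℓ : ℕ → ℕ} {m : ℕ} (hℓ : ∀ n, ℓ n ≤ n ∧ n ≤ ℓ n + m)
    (h : ∀ k ≤ m, Tendsto (fun n => u (ℓ n - k)) atTop (𝓝 L)) :
    Tendsto u atTop (𝓝 L) := by
  rw [tendsto_def]
  intro s hs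
  have hall : ∀ᶠ n in atTop, ∀ k ∈ Set.Iic m, u (ℓ n - k) ∈ s :=
    (Set.finite_Iic m).eventually_all.2 fun k hk => h k hk hs
  filter_upwards [(tendsto_add_atTop_nat m).eventually hall] with j hj
  obtain ⟨hle, hge⟩ := hℓ (j + m)
  have hj' := hj (ℓ (j + m) - j) (by simp only [Set.mem_Iic]; omega)
  rwa [show ℓ (j + m) - (ℓ (j + m) - j) = j by omega] at hj'

lemma tendsto_comp_sub_of_forall_tendsto_succ {X : Type*} [TopologicalSpace X] {u : ℕ → X}
    {L : X} {ℓ : ℕ → ℕ} (hℓ : Tendsto ℓ atTop atTop) (h₀ : Tendsto (u ∘ ℓ) atTop (𝓝 L))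
    (hstep : ∀ i : ℕ → ℕ, Tendsto i atTop atTop →
      Tendsto (fun n => u (i n + 1)) atTop (𝓝 L) → Tendsto (u ∘ i) atTop (𝓝 L))
    (k : ℕ) : Tendsto (fun n => u (ℓ n - k)) atTop (𝓝 L) := by
  induction k with
  | zero => simpa [Function.comp_def] using h₀
  | succ k ih =>
    refine hstep (fun n => ℓ n - (k + 1)) ((tendsto_sub_atTop_nat _).comp hℓ) (ih.congr' ?_)
    filter_upwards [hℓ.eventually (eventually_ge_atTop (k + 1))] with n hn
    congr 2
    omega

section WindowMax

def windowMax (f : ℕ → ℝ) (m j : ℕ) : ℝ :=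
  (Finset.range (min j m + 1)).sup' (Finset.nonempty_range_iff.mpr (Nat.succ_ne_zero _))
    fun r => f (j - r)

variable {f : ℕ → ℝ} {m : ℕ}

lemma le_windowMax (j : ℕ) : f j ≤ windowMax f m j :=
  Finset.le_sup' (fun r => f (j - r)) (Finset.mem_range.2 (Nat.succ_pos _))

@[simp]
lemma windowMax_zero : windowMax f m 0 = f 0 := by
  simp [windowMax]

lemma bddBelow_range_windowMax (h : BddBelow (Set.range f)) :
    BddBelow (Set.range (windowMax f m)) := by
  obtain ⟨B, hB⟩ := h
  exact ⟨B, by rintro _ ⟨j, rfl⟩; exact (hB ⟨j, rfl⟩).trans (le_windowMax j)⟩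

lemma exists_windowMax_eq (j : ℕ) : ∃ i, i ≤ j ∧ j ≤ i + m ∧ windowMax f m j = f i := by
  obtain ⟨r, hr, heq⟩ := Finset.exists_mem_eq_sup'
    (Finset.nonempty_range_iff.mpr (Nat.succ_ne_zero (min j m))) fun r => f (j - r)
  rw [Finset.mem_range] at hr
  exact ⟨j - r, by omega, by omega, heq⟩

lemma windowMax_succ_le {j : ℕ} (h : f (j + 1) ≤ windowMax f m j) :
    windowMax f m (j + 1) ≤ windowMax f m j := by
  refine Finset.sup'_le _ _ fun r hr => ?_
  rw [Finset.mem_range] at hr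
  rcases Nat.eq_zero_or_pos r with rfl | hpos
  · exact h
  · rw [show j + 1 - r = j - (r - 1) by omega]
    exact Finset.le_sup' (fun r => f (j - r)) (Finset.mem_range.2 (by omega))

lemma antitone_windowMax {g : ℕ → ℝ} (hg : ∀ j, 0 ≤ g j)
    (h : ∀ j, f (j + 1) + g j ≤ windowMax f m j) : Antitone (windowMax f m) :=
  antitone_nat_of_succ_le fun j => windowMax_succ_le ((le_add_of_nonneg_right (hg j)).trans (h j))

end WindowMax

section NonmonotoneDescent

variable {α : Type*} [PseudoMetricSpace α] {φ : α → ℝ} {w : ℕ → α} {m : ℕ} {c L : ℝ}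

lemma tendsto_dist_comp_of_tendsto_comp_succ (hc : 0 < c)
    (hdec : ∀ j, φ (w (j + 1)) + c * dist (w (j + 1)) (w j) ^ 2 ≤ windowMax (φ ∘ w) m j)
    (hM : Tendsto (windowMax (φ ∘ w) m) atTop (𝓝 L)) {i : ℕ → ℕ} (hi : Tendsto i atTop atTop)
    (h : Tendsto (fun n => φ (w (i n + 1))) atTop (𝓝 L)) :
    Tendsto (fun n => dist (w (i n + 1)) (w (i n))) atTop (𝓝 0) :=
  tendsto_zero_of_mul_sq_le (b := fun n => windowMax (φ ∘ w) m (i n) - φ (w (i n + 1))) hc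
    (fun _ => dist_nonneg) (fun n => by linarith [hdec (i n)])
    (by simpa using (hM.comp hi).sub h)

lemma tendsto_comp_of_tendsto_comp_succ {S : Set α} (hc : 0 < c) (hUC : UniformContinuousOn φ S)
    (hS : ∀ j, w j ∈ S)
    (hdec : ∀ j, φ (w (j + 1)) + c * dist (w (j + 1)) (w j) ^ 2 ≤ windowMax (φ ∘ w) m j)
    (hM : Tendsto (windowMax (φ ∘ w) m) atTop (𝓝 L)) {i : ℕ → ℕ} (hi : Tendsto i atTop atTop)
    (h : Tendsto (fun n => φ (w (i n + 1))) atTop (𝓝 L)) :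
    Tendsto (φ ∘ w ∘ i) atTop (𝓝 L) :=
  h.congr_dist <| hUC.tendsto_dist_comp (fun _ => hS _) (fun _ => hS _)
    (tendsto_dist_comp_of_tendsto_comp_succ hc hdec hM hi h)

theorem tendsto_dist_succ_of_le_windowMax {S : Set α} (hc : 0 < c)
    (hUC : UniformContinuousOn φ S) (hS : ∀ j, w j ∈ S) (hbdd : BddBelow (Set.range (φ ∘ w)))
    (hdec : ∀ j, φ (w (j + 1)) + c * dist (w (j + 1)) (w j) ^ 2 ≤ windowMax (φ ∘ w) m j) :
    Tendsto (fun j => dist (w (j + 1)) (w j)) atTop (𝓝 0) := by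
  have hanti : Antitone (windowMax (φ ∘ w) m) :=
    antitone_windowMax (fun _ => by positivity) hdec
  have hM : Tendsto (windowMax (φ ∘ w) m) atTop (𝓝 (⨅ j, windowMax (φ ∘ w) m j)) :=
    tendsto_atTop_ciInf hanti (bddBelow_range_windowMax hbdd)
  choose ℓ hℓj hjℓ hMℓ using exists_windowMax_eq (f := φ ∘ w) (m := m)
  have hℓ : Tendsto ℓ atTop atTop :=
    tendsto_atTop_mono (fun j => by have := hjℓ j; omega) (tendsto_sub_atTop_nat m)
  have hwindow := tendsto_comp_sub_of_forall_tendsto_succ (u := φ ∘ w) hℓ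
    (hM.congr fun j => hMℓ j) fun i hi => tendsto_comp_of_tendsto_comp_succ hc hUC hS hdec hM hi
  have hφw := tendsto_of_forall_tendsto_comp_sub (fun j => ⟨hℓj j, hjℓ j⟩) fun k _ => hwindow k
  exact tendsto_dist_comp_of_tendsto_comp_succ hc hdec hM tendsto_id
    (hφw.comp (tendsto_add_atTop_nat 1))

end NonmonotoneDescent

theorem stmt_14_general {E : Type*} [NormedAddCommGroup E] [InnerProductSpace ℝ E]
    [FiniteDimensional ℝ E]
    (D : Set E)
    (φ : E → ℝ)
    (w : ℕ → E) (hw : ∀ j, w j ∈ D)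
    (m : ℕ) (σ : ℝ) (hσ : 0 < σ ∧ σ < 1)
    (γ : ℕ → ℝ) (γmin : ℝ) (hγmin : 0 < γmin) (hγ : ∀ j, γmin ≤ γ j)
    (hbdd : BddBelow (φ '' {x | x ∈ D ∧ φ x ≤ φ (w 0)}))
    (hUC : UniformContinuousOn φ {x | x ∈ D ∧ φ x ≤ φ (w 0)})
    (harm : ∀ j, φ (w (j + 1)) ≤
      ((Finset.range (min j m + 1)).sup'
        (Finset.nonempty_range_iff.mpr (Nat.succ_ne_zero _))
        fun r => φ (w (j - r))) +
      σ * (inner ℝ (gradient φ (w j)) (w (j + 1) - w j) : ℝ))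
    (hdesc : ∀ j, (inner ℝ (gradient φ (w j)) (w (j + 1) - w j) : ℝ) ≤
      -(γ j / 2) * ‖w (j + 1) - w j‖ ^ 2) :
    Filter.Tendsto (fun j => ‖w (j + 1) - w j‖) Filter.atTop (nhds 0) := by
  have hc : 0 < σ * γmin / 2 := by have := hσ.1; positivity
  have hdec : ∀ j, φ (w (j + 1)) + σ * γmin / 2 * dist (w (j + 1)) (w j) ^ 2 ≤
      windowMax (φ ∘ w) m j := by
    intro j
    have hσd := mul_le_mul_of_nonneg_left (hdesc j) hσ.1.le
    have hγd := mul_le_mul_of_nonneg_left (hγ j) (mul_nonneg hσ.1.le (sq_nonneg ‖w (j + 1) - w j‖))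
    have harm' : φ (w (j + 1)) ≤ windowMax (φ ∘ w) m j +
        σ * (inner ℝ (gradient φ (w j)) (w (j + 1) - w j) : ℝ) := harm j
    rw [dist_eq_norm]
    linarith
  have hsub : ∀ j, φ (w j) ≤ φ (w 0) := fun j =>
    (le_windowMax (f := φ ∘ w) (m := m) j).trans <|
      (antitone_windowMax (fun _ => by positivity) hdec (Nat.zero_le j)).trans_eq
        windowMax_zero
  have hwS : ∀ j, w j ∈ {x | x ∈ D ∧ φ x ≤ φ (w 0)} := fun j => ⟨hw j, hsub j⟩
  simpa [dist_eq_norm] using tendsto_dist_succ_of_le_windowMax hc hUC hwS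
    (hbdd.mono (Set.range_subset_iff.2 fun j => Set.mem_image_of_mem φ (hwS j))) hdec

theorem stmt_14 {E : Type*} [NormedAddCommGroup E] [InnerProductSpace ℝ E]
    [FiniteDimensional ℝ E]
    (D : Set E) (hDcl : IsClosed D)
    (φ : E → ℝ) (hφ : ContDiff ℝ 1 φ)
    (w : ℕ → E) (hw : ∀ j, w j ∈ D)
    (m : ℕ) (σ : ℝ) (hσ : 0 < σ ∧ σ < 1)
    (γ : ℕ → ℝ) (γmin : ℝ) (hγmin : 0 < γmin) (hγ : ∀ j, γmin ≤ γ j)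
    (hbdd : BddBelow (φ '' {x | x ∈ D ∧ φ x ≤ φ (w 0)}))
    (hUC : UniformContinuousOn φ {x | x ∈ D ∧ φ x ≤ φ (w 0)})
    (harm : ∀ j, φ (w (j + 1)) ≤
      ((Finset.range (min j m + 1)).sup'
        (Finset.nonempty_range_iff.mpr (Nat.succ_ne_zero _))
        fun r => φ (w (j - r))) +
      σ * (inner ℝ (gradient φ (w j)) (w (j + 1) - w j) : ℝ))
    (hdesc : ∀ j, (inner ℝ (gradient φ (w j)) (w (j + 1) - w j) : ℝ) ≤
      -(γ j / 2) * ‖w (j + 1) - w j‖ ^ 2) :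
    Filter.Tendsto (fun j => ‖w (j + 1) - w j‖) Filter.atTop (nhds 0) :=
  stmt_14_general D φ w hw m σ hσ γ γmin hγmin hγ hbdd hUC harm hdesc
end
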